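/- arXiv:2605.19542 — 7 statements merged into one kernel-verified Lean document; each statement's English description precedes it below -/
import Mathlib

section
/- Let p be a prime, A, B finite subsets of Z/pZ with weights w_1, w_2, and define α_i, β_i, w, γ_n as follows: α_i = ∑_{a ∈ A} w_1(a) a^i, β_i = ∑_{b ∈ B} w_2(b) b^i, w(c) = ∑_{a+b=c} w_1(a) w_2(b)(a−b) for c in C = A ∔ B, and γ_n = ∑_{c ∈ C} w(c) c^n. Suppose r, s are natural numbers with α_i = 0 for all 0 ≤ i ≤ r and β_i = 0 for all 0 ≤ i ≤ s. Then γ_{r+s+1} = (C(r+s+1, r) − C(r+s+1, s)) · α_{r+1} · β_{s+1} in Z/pZ. -/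
theorem stmt3 (p : ℕ) (hp : p.Prime) (A B : Finset (ZMod p))
    (hA : A.Nonempty) (hB : B.Nonempty) (w1 w2 : ZMod p → ZMod p) (r s : ℕ)
    (hα : ∀ i ≤ r, ∑ a ∈ A, w1 a * a ^ i = 0)
    (hβ : ∀ i ≤ s, ∑ b ∈ B, w2 b * b ^ i = 0) :
    let C : Finset (ZMod p) :=
      ((A ×ˢ B).filter fun x => x.1 ≠ x.2).image fun x => x.1 + x.2
    let w : ZMod p → ZMod p := fun c =>
      ∑ a ∈ A, ∑ b ∈ B, if a + b = c then w1 a * w2 b * (a - b) else 0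
    (∑ c ∈ C, w c * c ^ (r + s + 1)) =
      (((r + s + 1).choose r : ZMod p) - ((r + s + 1).choose s : ZMod p)) *
        (∑ a ∈ A, w1 a * a ^ (r + 1)) * (∑ b ∈ B, w2 b * b ^ (s + 1)) := by
  intro C w
  set n := r + s + 1 with hn
  -- Step 1: rewrite LHS as a double sum over A × B
  have key : (∑ c ∈ C, w c * c ^ n)
      = ∑ a ∈ A, ∑ b ∈ B, w1 a * w2 b * (a - b) * (a + b) ^ n := by
    have h1 : (∑ c ∈ C, w c * c ^ n)
        = ∑ a ∈ A, ∑ b ∈ B, ∑ c ∈ C,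
            if a + b = c then w1 a * w2 b * (a - b) * c ^ n else 0 := by
      simp only [w, Finset.sum_mul, ite_mul, zero_mul]
      rw [Finset.sum_comm]
      exact Finset.sum_congr rfl fun a _ => Finset.sum_comm
    rw [h1]
    apply Finset.sum_congr rfl
    intro a ha
    apply Finset.sum_congr rfl
    intro b hb
    rw [Finset.sum_ite_eq C (a + b) (fun c => w1 a * w2 b * (a - b) * c ^ n)]
    by_cases hab : a = b
    · subst hab
      simp
    · have : a + b ∈ C := by
        simp only [C, Finset.mem_image, Finset.mem_filter, Finset.mem_product]
        exact ⟨(a, b), ⟨⟨ha, hb⟩, hab⟩, rfl⟩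
      rw [if_pos this]
  rw [key]
  -- Step 2: binomial expansion
  have h2 : ∀ a b : ZMod p, w1 a * w2 b * (a - b) * (a + b) ^ n
      = ∑ k ∈ Finset.range (n + 1), (n.choose k : ZMod p) *
          ((w1 a * a ^ (k + 1)) * (w2 b * b ^ (n - k))
            - (w1 a * a ^ k) * (w2 b * b ^ (n - k + 1))) := by
    intro a b
    rw [add_pow, Finset.mul_sum]
    apply Finset.sum_congr rfl
    intro k _
    ring
  simp only [h2]
  have h3 : (∑ a ∈ A, ∑ b ∈ B, ∑ k ∈ Finset.range (n + 1), (n.choose k : ZMod p) *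
          ((w1 a * a ^ (k + 1)) * (w2 b * b ^ (n - k))
            - (w1 a * a ^ k) * (w2 b * b ^ (n - k + 1))))
      = ∑ k ∈ Finset.range (n + 1), (n.choose k : ZMod p) *
          ((∑ a ∈ A, w1 a * a ^ (k + 1)) * (∑ b ∈ B, w2 b * b ^ (n - k))
            - (∑ a ∈ A, w1 a * a ^ k) * (∑ b ∈ B, w2 b * b ^ (n - k + 1))) := by
    refine Eq.trans (Finset.sum_congr rfl fun a _ => Finset.sum_comm)
      (Eq.trans Finset.sum_comm (Finset.sum_congr rfl fun k _ => ?_))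
    simp only [mul_sub, Finset.mul_sum, Finset.sum_mul, Finset.sum_sub_distrib, mul_assoc]
    congr 1 <;> exact Finset.sum_comm
  rw [h3]
  simp only [mul_sub]
  rw [Finset.sum_sub_distrib]
  have hS1 : (∑ k ∈ Finset.range (n + 1), (n.choose k : ZMod p) *
        ((∑ a ∈ A, w1 a * a ^ (k + 1)) * (∑ b ∈ B, w2 b * b ^ (n - k))))
      = (n.choose r : ZMod p) *
        ((∑ a ∈ A, w1 a * a ^ (r + 1)) * (∑ b ∈ B, w2 b * b ^ (s + 1))) := by
    rw [Finset.sum_eq_single r]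
    · have e : n - r = s + 1 := by omega
      rw [e]
    · intro k hk hkr
      rw [Finset.mem_range] at hk
      rcases lt_or_gt_of_ne hkr with h | h
      · rw [hα (k + 1) (by omega)]
        ring
      · rw [hβ (n - k) (by omega)]
        ring
    · intro h
      exact absurd (Finset.mem_range.2 (by omega)) h
  have hS2 : (∑ k ∈ Finset.range (n + 1), (n.choose k : ZMod p) *
        ((∑ a ∈ A, w1 a * a ^ k) * (∑ b ∈ B, w2 b * b ^ (n - k + 1))))
      = (n.choose s : ZMod p) *
        ((∑ a ∈ A, w1 a * a ^ (r + 1)) * (∑ b ∈ B, w2 b * b ^ (s + 1))) := by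
    rw [Finset.sum_eq_single (r + 1)]
    · have e : n - (r + 1) + 1 = s + 1 := by omega
      rw [e]
      have e2 : n.choose (r + 1) = n.choose s := by
        rw [← Nat.choose_symm (by omega : r + 1 ≤ n)]
        congr 1
        omega
      rw [e2]
    · intro k hk hkr
      rw [Finset.mem_range] at hk
      rcases lt_or_gt_of_ne hkr with h | h
      · rw [hα k (by omega)]
        ring
      · rw [hβ (n - k + 1) (by omega)]
        ring
    · intro h
      exact absurd (Finset.mem_range.2 (by omega)) h
  rw [hS1, hS2]
  ring
end

section
/- Let p be a prime, A, B finite subsets of Z/pZ with weights w_1, w_2, and define α_i = ∑_{a ∈ A} w_1(a) a^i, β_i = ∑_{b ∈ B} w_2(b) b^i, w(c) = ∑_{a+b=c} w_1(a) w_2(b)(a−b) for c in C = A ∔ B, and γ_n = ∑_{c ∈ C} w(c) c^n. If α_i = 0 for all 0 ≤ i ≤ r and β_i = 0 for all 0 ≤ i ≤ s, then γ_n = 0 for all 0 ≤ n ≤ r + s. -/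
theorem stmt4 (p : ℕ) (hp : p.Prime) (A B : Finset (ZMod p))
    (hA : A.Nonempty) (hB : B.Nonempty) (w1 w2 : ZMod p → ZMod p) (r s : ℕ)
    (hα : ∀ i ≤ r, ∑ a ∈ A, w1 a * a ^ i = 0)
    (hβ : ∀ i ≤ s, ∑ b ∈ B, w2 b * b ^ i = 0) :
    let C : Finset (ZMod p) :=
      ((A ×ˢ B).filter fun x => x.1 ≠ x.2).image fun x => x.1 + x.2
    let w : ZMod p → ZMod p := fun c =>
      ∑ a ∈ A, ∑ b ∈ B, if a + b = c then w1 a * w2 b * (a - b) else 0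
    ∀ n ≤ r + s, (∑ c ∈ C, w c * c ^ n) = 0 := by
  intro C w n hn
  have h1 : ∑ c ∈ C, w c * c ^ n
      = ∑ a ∈ A, ∑ b ∈ B, w1 a * w2 b * (a - b) * (a + b) ^ n := by
    simp only [w, Finset.sum_mul, ite_mul, zero_mul]
    rw [Finset.sum_comm]
    refine Finset.sum_congr rfl fun a ha => ?_
    rw [Finset.sum_comm]
    refine Finset.sum_congr rfl fun b hb => ?_
    simp only [eq_comm (a := a + b)]
    rw [Finset.sum_ite_eq' C (a + b) (fun c => w1 a * w2 b * (a - b) * c ^ n)]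
    by_cases hab : a = b
    · subst hab; simp
    · rw [if_pos]
      simp only [C, Finset.mem_image, Finset.mem_filter, Finset.mem_product]
      exact ⟨(a, b), ⟨⟨ha, hb⟩, hab⟩, rfl⟩
  rw [h1]
  have h2 : ∀ a b : ZMod p, w1 a * w2 b * (a - b) * (a + b) ^ n
      = ∑ k ∈ Finset.range (n + 1),
          (n.choose k : ZMod p) *
            ((w1 a * a ^ (k + 1)) * (w2 b * b ^ (n - k))
              - (w1 a * a ^ k) * (w2 b * b ^ (n - k + 1))) := by
    intro a b
    rw [add_pow, Finset.mul_sum]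
    exact Finset.sum_congr rfl fun k hk => by ring
  simp only [h2]
  have hswap : (∑ a ∈ A, ∑ b ∈ B, ∑ k ∈ Finset.range (n + 1),
      (n.choose k : ZMod p) *
        ((w1 a * a ^ (k + 1)) * (w2 b * b ^ (n - k))
          - (w1 a * a ^ k) * (w2 b * b ^ (n - k + 1))))
      = ∑ k ∈ Finset.range (n + 1), ∑ a ∈ A, ∑ b ∈ B,
      (n.choose k : ZMod p) *
        ((w1 a * a ^ (k + 1)) * (w2 b * b ^ (n - k))
          - (w1 a * a ^ k) * (w2 b * b ^ (n - k + 1))) := by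
    have step : ∀ a : ZMod p, ∑ b ∈ B, ∑ k ∈ Finset.range (n + 1),
        (n.choose k : ZMod p) *
          ((w1 a * a ^ (k + 1)) * (w2 b * b ^ (n - k))
            - (w1 a * a ^ k) * (w2 b * b ^ (n - k + 1)))
        = ∑ k ∈ Finset.range (n + 1), ∑ b ∈ B,
        (n.choose k : ZMod p) *
          ((w1 a * a ^ (k + 1)) * (w2 b * b ^ (n - k))
            - (w1 a * a ^ k) * (w2 b * b ^ (n - k + 1))) :=
      fun a => Finset.sum_comm
    simp only [step]
    exact Finset.sum_comm
  rw [hswap]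
  apply Finset.sum_eq_zero
  intro k hk
  have hkn : k ≤ n := Nat.lt_succ_iff.mp (Finset.mem_range.mp hk)
  have e1 : (∑ a ∈ A, w1 a * a ^ (k + 1)) * (∑ b ∈ B, w2 b * b ^ (n - k)) = 0 := by
    by_cases h : n - k ≤ s
    · rw [hβ _ h, mul_zero]
    · rw [hα (k + 1) (by omega), zero_mul]
  have e2 : (∑ a ∈ A, w1 a * a ^ k) * (∑ b ∈ B, w2 b * b ^ (n - k + 1)) = 0 := by
    by_cases h : k ≤ r
    · rw [hα _ h, zero_mul]
    · rw [hβ (n - k + 1) (by omega), mul_zero]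
  calc ∑ a ∈ A, ∑ b ∈ B, (n.choose k : ZMod p) *
        ((w1 a * a ^ (k + 1)) * (w2 b * b ^ (n - k))
          - (w1 a * a ^ k) * (w2 b * b ^ (n - k + 1)))
      = (n.choose k : ZMod p) *
        ((∑ a ∈ A, w1 a * a ^ (k + 1)) * (∑ b ∈ B, w2 b * b ^ (n - k))
          - (∑ a ∈ A, w1 a * a ^ k) * (∑ b ∈ B, w2 b * b ^ (n - k + 1))) := by
        rw [Finset.sum_mul_sum, Finset.sum_mul_sum, ← Finset.sum_sub_distrib,
          Finset.mul_sum]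
        exact Finset.sum_congr rfl fun a _ => by
          rw [← Finset.sum_sub_distrib, Finset.mul_sum]
    _ = 0 := by rw [e1, e2, sub_zero, mul_zero]
end

section
/- (Alon–Nathanson–Ruzsa theorem) Let p be a prime, and let A and B be nonempty subsets of Z/pZ with |A| ≠ |B|. Then the restricted sumset A ∔ B = {a + b : a ∈ A, b ∈ B, a ≠ b} satisfies |A ∔ B| ≥ min(p, |A| + |B| − 2). -/
/-! Combinatorial Nullstellensatz. Write `#A = a + 2`, `#B = b + 2`, and suppose `A ∔ B` lies in
a multiset `s` of `a + b + 1` elements. Then `(x - y) * ∏ c ∈ s, (x + y - c)` vanishes on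
`A × B`, has total degree `a + b + 2`, and its coefficient of `x ^ (a + 1) * y ^ (b + 1)` is that
of `(x - y) * (x + y) ^ (a + b + 1)`, namely `C(a+b+1, a) - C(a+b+1, a+1)`. Since
`C(N, a+1) * (a + 1) = C(N, a) * (b + 1)`, it is nonzero in `ZMod p` when `a ≠ b` and
`a + b + 1 < p`. If `#A + #B - 2 > p`, shrink `A` to `p + 2 - #B` elements; singletons are
direct. -/

open Finset MvPolynomial

section RestrictedSumset

variable {α : Type*} [DecidableEq α]

def restrictedSumset [Add α] (A B : Finset α) : Finset α :=
  ((A ×ˢ B).filter fun x => x.1 ≠ x.2).image fun x => x.1 + x.2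

section Add

variable [Add α] {A A' B : Finset α} {x : α}

theorem mem_restrictedSumset :
    x ∈ restrictedSumset A B ↔ ∃ a ∈ A, ∃ b ∈ B, a ≠ b ∧ a + b = x := by
  simp [restrictedSumset, and_assoc]

theorem add_mem_restrictedSumset {a b : α} (ha : a ∈ A) (hb : b ∈ B) (hab : a ≠ b) :
    a + b ∈ restrictedSumset A B :=
  mem_restrictedSumset.2 ⟨a, ha, b, hb, hab, rfl⟩

theorem restrictedSumset_mono_left (h : A' ⊆ A) :
    restrictedSumset A' B ⊆ restrictedSumset A B := by
  unfold restrictedSumset; gcongr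

end Add

theorem restrictedSumset_comm [AddCommMagma α] (A B : Finset α) :
    restrictedSumset A B = restrictedSumset B A := by
  ext x
  simp only [mem_restrictedSumset]
  constructor <;>
  · rintro ⟨a, ha, b, hb, hab, rfl⟩
    exact ⟨b, hb, a, ha, hab.symm, add_comm b a⟩

theorem card_sub_one_le_card_restrictedSumset_singleton [Add α] [IsLeftCancelAdd α] (a : α)
    (B : Finset α) : #B - 1 ≤ #(restrictedSumset {a} B) :=
  calc #B - 1 ≤ #(B.erase a) := pred_card_le_card_erase
    _ = #((B.erase a).image (a + ·)) := (card_image_of_injective _ (add_right_injective a)).symm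
    _ ≤ #(restrictedSumset {a} B) := card_le_card fun x hx => by
      obtain ⟨b, hb, rfl⟩ := mem_image.1 hx
      exact add_mem_restrictedSumset (mem_singleton_self a) (mem_of_mem_erase hb)
        (ne_of_mem_erase hb).symm

end RestrictedSumset

namespace MvPolynomial

variable {σ R : Type*} [CommRing R] {g : MvPolynomial σ R}

theorem totalDegree_multiset_prod_sub_C_le (hg : g.totalDegree ≤ 1) (s : Multiset R) :
    (s.map fun c => g - C c).prod.totalDegree ≤ Multiset.card s := by
  induction s using Multiset.induction_on with
  | empty => simp
  | cons a s ih =>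
    rw [Multiset.map_cons, Multiset.prod_cons, Multiset.card_cons, add_comm]
    exact (totalDegree_mul _ _).trans
      (add_le_add ((totalDegree_sub_C_le g a).trans hg) ih)

theorem totalDegree_multiset_prod_sub_C_sub_pow_lt (hg : g.totalDegree ≤ 1) {s : Multiset R}
    (hs : s ≠ 0) :
    ((s.map fun c => g - C c).prod - g ^ Multiset.card s).totalDegree < Multiset.card s := by
  induction s using Multiset.induction_on with
  | empty => exact absurd rfl hs
  | cons a s ih =>
    rw [Multiset.map_cons, Multiset.prod_cons, Multiset.card_cons]
    rcases eq_or_ne s 0 with rfl | hs'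
    · simp
    set P := (s.map fun c => g - C c).prod
    have hsplit : (g - C a) * P - g ^ (Multiset.card s + 1) =
        g * (P - g ^ Multiset.card s) - C a * P := by
      ring
    rw [hsplit]
    refine (totalDegree_sub _ _).trans_lt (max_lt ?_ ?_)
    · have := ih hs'
      have := (totalDegree_mul g (P - g ^ Multiset.card s))
      omega
    · have hP : P.totalDegree ≤ Multiset.card s := totalDegree_multiset_prod_sub_C_le hg s
      have := totalDegree_mul (C a) P
      rw [totalDegree_C] at this
      omega

theorem totalDegree_X_add_X_le [Nontrivial R] (i j : σ) :
    (X i + X j : MvPolynomial σ R).totalDegree ≤ 1 :=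
  (totalDegree_add _ _).trans (by simp [totalDegree_X])

theorem totalDegree_X_sub_X_le [Nontrivial R] (i j : σ) :
    (X i - X j : MvPolynomial σ R).totalDegree ≤ 1 :=
  (totalDegree_sub _ _).trans (by simp [totalDegree_X])

variable [DecidableEq σ] {i j : σ}

theorem coeff_X_add_X_pow (hij : i ≠ j) (a b : ℕ) :
    coeff (Finsupp.single i a + Finsupp.single j b) ((X i + X j : MvPolynomial σ R) ^ (a + b)) =
      (a + b).choose a := by
  have hterm : ∀ k, (X i ^ k * X j ^ (a + b - k) * ((a + b).choose k : MvPolynomial σ R)) =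
      monomial (Finsupp.single i k + Finsupp.single j (a + b - k)) ((a + b).choose k : R) := by
    intro k
    rw [X_pow_eq_monomial, X_pow_eq_monomial, monomial_mul, ← C_eq_coe_nat, mul_comm,
      C_mul_monomial]
    simp
  simp only [add_pow, coeff_sum, hterm, coeff_monomial]
  rw [Finset.sum_eq_single a]
  · simp
  · intro k _ hk
    rw [if_neg fun h => hk (by simpa [hij] using congrArg (· i) h)]
  · simp

theorem coeff_X_sub_X_mul_X_add_X_pow (hij : i ≠ j) (a b : ℕ) :
    coeff (Finsupp.single i (a + 1) + Finsupp.single j (b + 1))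
        ((X i - X j : MvPolynomial σ R) * (X i + X j) ^ (a + b + 1)) =
      ((a + b + 1).choose a - (a + b + 1).choose (a + 1) : R) := by
  have hi : Finsupp.single i (a + 1) + Finsupp.single j (b + 1) - Finsupp.single i 1 =
      Finsupp.single i a + Finsupp.single j (b + 1) := by
    ext k; by_cases hk : k = i <;> simp_all [Finsupp.single_apply]
  have hj : Finsupp.single i (a + 1) + Finsupp.single j (b + 1) - Finsupp.single j 1 =
      Finsupp.single i (a + 1) + Finsupp.single j b := by
    ext k; by_cases hk : k = j <;> simp_all [Finsupp.single_apply]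
  rw [sub_mul, coeff_sub, coeff_X_mul', coeff_X_mul', if_pos (by simp [hij]),
    if_pos (by simp [hij.symm]), hi, hj, show a + b + 1 = a + (b + 1) by ring,
    coeff_X_add_X_pow hij, ← show a + 1 + b = a + (b + 1) by ring, coeff_X_add_X_pow hij]

theorem coeff_X_sub_X_mul_multiset_prod [Nontrivial R] (hij : i ≠ j) {a b : ℕ} {s : Multiset R}
    (hs : Multiset.card s = a + b + 1) :
    coeff (Finsupp.single i (a + 1) + Finsupp.single j (b + 1))
        ((X i - X j) * (s.map fun c => X i + X j - C c).prod) =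
      ((a + b + 1).choose a - (a + b + 1).choose (a + 1) : R) := by
  set P := (s.map fun c => X i + X j - C c).prod
  have hsplit : (X i - X j) * P = (X i - X j) * (X i + X j) ^ (a + b + 1) +
      (X i - X j) * (P - (X i + X j) ^ Multiset.card s) := by
    rw [hs]; ring
  have hlower : ((X i - X j) * (P - (X i + X j) ^ Multiset.card s)).totalDegree <
      (Finsupp.single i (a + 1) + Finsupp.single j (b + 1)).degree := by
    have h1 := totalDegree_mul (X i - X j : MvPolynomial σ R) (P - (X i + X j) ^ Multiset.card s)
    have h2 : (P - (X i + X j) ^ Multiset.card s).totalDegree < Multiset.card s :=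
      totalDegree_multiset_prod_sub_C_sub_pow_lt (totalDegree_X_add_X_le i j)
        (by rw [← Multiset.card_pos]; omega)
    have h3 := totalDegree_X_sub_X_le (R := R) i j
    simp only [map_add, Finsupp.degree_single]
    omega
  rw [hsplit, coeff_add, coeff_X_sub_X_mul_X_add_X_pow hij,
    coeff_eq_zero_of_totalDegree_lt hlower, add_zero]

end MvPolynomial

theorem Nat.cast_choose_ne_cast_choose_succ {R : Type*} [CommRing R] [IsDomain R] {a b : ℕ}
    (hfac : ((a + b + 1).factorial : R) ≠ 0) (hab : (a : R) ≠ b) :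
    ((a + b + 1).choose a : R) ≠ (a + b + 1).choose (a + 1) := by
  have hrec : ((a + b + 1).choose (a + 1) : R) * (a + 1) = (a + b + 1).choose a * (b + 1) := by
    have := Nat.choose_succ_right_eq (a + b + 1) a
    rw [show a + b + 1 - a = b + 1 by omega] at this
    simpa using congrArg (Nat.cast : ℕ → R) this
  have hchoose : ((a + b + 1).choose a : R) ≠ 0 := by
    have := Nat.choose_mul_factorial_mul_factorial (show a ≤ a + b + 1 by omega)
    intro h
    apply hfac
    rw [← this]
    push_cast
    rw [h, zero_mul, zero_mul]
  intro h
  rw [← h] at hrec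
  exact hab (by simpa using mul_left_cancel₀ hchoose hrec)

theorem add_card_sub_two_le_card_restrictedSumset {R : Type*} [CommRing R] [IsDomain R]
    [DecidableEq R] {A B : Finset R} (hA : 2 ≤ #A) (hB : 2 ≤ #B)
    (hfac : ((#A + #B - 3).factorial : R) ≠ 0) (hAB : (#A : R) ≠ #B) :
    #A + #B - 2 ≤ #(restrictedSumset A B) := by
  obtain ⟨a, ha⟩ : ∃ a, #A = a + 2 := ⟨#A - 2, by omega⟩
  obtain ⟨b, hb⟩ : ∃ b, #B = b + 2 := ⟨#B - 2, by omega⟩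
  rw [ha, hb, show a + 2 + (b + 2) - 3 = a + b + 1 by omega] at hfac
  rw [ha, hb] at hAB ⊢
  push_cast at hAB
  by_contra! hlt
  set S := restrictedSumset A B
  -- padding `S` with zeros brings the degree up to exactly `#A + #B - 2`
  let s : Multiset R := S.val + Multiset.replicate (a + b + 1 - #S) 0
  have hs : Multiset.card s = a + b + 1 := by simp [s]; omega
  let f : MvPolynomial (Fin 2) R := (X 0 - X 1) * (s.map fun c => X 0 + X 1 - C c).prod
  let t : Fin 2 →₀ ℕ := Finsupp.single 0 (a + 1) + Finsupp.single 1 (b + 1)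
  have hcoeff : coeff t f ≠ 0 := by
    rw [coeff_X_sub_X_mul_multiset_prod (by decide) hs]
    exact sub_ne_zero.2 (Nat.cast_choose_ne_cast_choose_succ hfac (by simpa using hAB))
  have hdeg : f.totalDegree = t.degree := by
    refine le_antisymm ?_ (le_totalDegree (mem_support_iff.2 hcoeff))
    have h1 : f.totalDegree ≤ _ := totalDegree_mul _ _
    have h2 := totalDegree_X_sub_X_le (R := R) (0 : Fin 2) 1
    have h3 := totalDegree_multiset_prod_sub_C_le
      (totalDegree_X_add_X_le (R := R) (0 : Fin 2) 1) s
    simp only [t, map_add, Finsupp.degree_single]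
    omega
  obtain ⟨x, hx, hfx⟩ :=
    combinatorial_nullstellensatz_exists_eval_nonzero f t hcoeff hdeg ![A, B]
    (by intro i; fin_cases i <;> simp [t, ha, hb])
  have hxA : x 0 ∈ A := hx 0
  have hxB : x 1 ∈ B := hx 1
  by_cases hx01 : x 0 = x 1
  · apply hfx
    simp [f, hx01]
  · have hmem : x 0 + x 1 ∈ s :=
      Multiset.mem_add.2 (.inl (add_mem_restrictedSumset hxA hxB hx01))
    rw [map_mul, map_multiset_prod, Multiset.map_map] at hfx
    refine hfx (mul_eq_zero_of_right _ (Multiset.prod_eq_zero (Multiset.mem_map.2 ⟨_, hmem, ?_⟩)))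
    simp

namespace ZMod

variable {p : ℕ} [Fact p.Prime] {A B : Finset (ZMod p)}

theorem add_card_sub_two_le_card_restrictedSumset (hA : 2 ≤ #A) (hB : 2 ≤ #B) (hAB : #A ≠ #B)
    (hp : #A + #B - 2 ≤ p) : #A + #B - 2 ≤ #(restrictedSumset A B) := by
  refine _root_.add_card_sub_two_le_card_restrictedSumset hA hB ?_ ?_
  · rw [Ne, natCast_eq_zero_iff, (Fact.out : p.Prime).dvd_factorial]
    omega
  · rw [Ne, natCast_eq_natCast_iff]
    exact fun h => hAB (h.eq_of_abs_lt (abs_sub_lt_iff.2 (by omega)))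

theorem min_le_card_restrictedSumset (hA : A.Nonempty) (hB : B.Nonempty) (hAB : #A ≠ #B) :
    min p (#A + #B - 2) ≤ #(restrictedSumset A B) := by
  have hAp : #A ≤ p := by simpa using card_le_univ A
  have hBp : #B ≤ p := by simpa using card_le_univ B
  obtain hA1 | hA2 : #A = 1 ∨ 2 ≤ #A := by have := hA.card_pos; omega
  · obtain ⟨a, rfl⟩ := card_eq_one.1 hA1
    have := card_sub_one_le_card_restrictedSumset_singleton a B
    rw [card_singleton]
    omega
  obtain hB1 | hB2 : #B = 1 ∨ 2 ≤ #B := by have := hB.card_pos; omega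
  · obtain ⟨b, rfl⟩ := card_eq_one.1 hB1
    have := card_sub_one_le_card_restrictedSumset_singleton b A
    rw [card_singleton, restrictedSumset_comm]
    omega
  by_cases hsmall : #A + #B - 2 ≤ p
  · exact (min_le_right _ _).trans (add_card_sub_two_le_card_restrictedSumset hA2 hB2 hAB hsmall)
  obtain ⟨A', hA'A, hA'⟩ := exists_subset_card_eq (show p + 2 - #B ≤ #A by omega)
  have hp2 : p ≠ 2 := by rintro rfl; omega
  -- `p` is odd, so `#A' = p + 2 - #B` differs from `#B`
  obtain ⟨k, rfl⟩ := (Fact.out : p.Prime).odd_of_ne_two hp2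
  have hA'B := add_card_sub_two_le_card_restrictedSumset (A := A') (B := B) (by omega) hB2
    (by omega) (by omega)
  have := card_le_card (restrictedSumset_mono_left (B := B) hA'A)
  omega

end ZMod

theorem stmt8 (p : ℕ) (hp : p.Prime) (A B : Finset (ZMod p))
    (hA : A.Nonempty) (hB : B.Nonempty) (hcard : A.card ≠ B.card) :
    (((((A ×ˢ B).filter fun x => x.1 ≠ x.2).image fun x => x.1 + x.2).card : ℤ)) ≥
      min (p : ℤ) ((A.card : ℤ) + (B.card : ℤ) - 2) := by
  have := Fact.mk hp
  have := ZMod.min_le_card_restrictedSumset hA hB hcard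
  have := hA.card_pos
  have := hB.card_pos
  change min (p : ℤ) _ ≤ #(restrictedSumset A B)
  omega
end

section
/- (Erdős–Heilbronn conjecture / Dias da Silva–Hamidoune theorem) Let p be a prime and let A be a nonempty subset of Z/pZ. Then the restricted sumset A ∔ A = {a + b : a, b ∈ A, a ≠ b} satisfies |A ∔ A| ≥ min(p, 2|A| − 3). -/
open Polynomial Finset

variable {F : Type*} [Field F] [DecidableEq F]

lemma coeff_basis_top (S : Finset F) {a : F} (ha : a ∈ S) :
    (Lagrange.basis S id a).coeff (S.card - 1) = Lagrange.nodalWeight S id a := by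
  rw [Lagrange.basis_eq_prod_sub_inv_mul_nodal_div ha, ← Lagrange.nodal_erase_eq_nodal_div ha,
    coeff_C_mul]
  have hmon : (Lagrange.nodal (S.erase a) id).Monic := Lagrange.nodal_monic
  have hdeg : (Lagrange.nodal (S.erase a) id).natDegree = S.card - 1 := by
    rw [Lagrange.natDegree_nodal, Finset.card_erase_of_mem ha]
  rw [← hdeg, hmon.coeff_natDegree, mul_one]

lemma esum (S : Finset F) (i : ℕ) (hi : i < S.card) :
    (∑ a ∈ S, a ^ i * Lagrange.nodalWeight S id a) =
      if i = S.card - 1 then 1 else 0 := by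
  have hvs : Set.InjOn (id : F → F) S := Function.injective_id.injOn
  have hdeg : (X ^ i : F[X]).degree < S.card := by
    simpa [degree_X_pow] using (by exact_mod_cast hi : ((i : ℕ) : WithBot ℕ) < (S.card : WithBot ℕ))
  have h := Lagrange.eq_interpolate hvs hdeg
  have h2 := congrArg (fun q => q.coeff (S.card - 1)) h
  simp only [Lagrange.interpolate_apply, finset_sum_coeff, coeff_C_mul, coeff_X_pow] at h2
  rw [eq_comm]
  rw [show (if i = S.card - 1 then (1:F) else 0) = if S.card - 1 = i then 1 else 0 by
    simp [eq_comm]]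
  rw [h2]
  refine Finset.sum_congr rfl fun a ha => ?_
  rw [coeff_basis_top S ha]
  simp

lemma key (S T : Finset F) (s t : ℕ) (hS : S.card = s + 2) (hT : T.card = t + 2)
    (P : F[X]) (hP : P.natDegree ≤ s + 1 + t) :
    (∑ a ∈ S, ∑ b ∈ T, (a - b) * P.eval (a + b) *
        (Lagrange.nodalWeight S id a * Lagrange.nodalWeight T id b)) =
      P.coeff (s + 1 + t) *
        (((s + 1 + t).choose s : F) - ((s + 1 + t).choose (s + 1) : F)) := by
  classical
  set n := s + 1 + t with hn
  set wS : F → F := Lagrange.nodalWeight S id with hwS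
  set wT : F → F := Lagrange.nodalWeight T id with hwT
  have eS : ∀ i : ℕ, i < s + 2 → (∑ a ∈ S, a ^ i * wS a) = if i = s + 1 then 1 else 0 := by
    intro i hi
    rw [hwS, esum S i (by omega : i < S.card), hS]
    norm_num
  have eT : ∀ j : ℕ, j < t + 2 → (∑ b ∈ T, b ^ j * wT b) = if j = t + 1 then 1 else 0 := by
    intro j hj
    rw [hwT, esum T j (by omega : j < T.card), hT]
    norm_num
  -- pointwise expansion
  have point : ∀ a ∈ S, ∀ b ∈ T,
      (a - b) * P.eval (a + b) * (wS a * wT b) =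
      ∑ m ∈ range (n + 1), ∑ i ∈ range (m + 1),
        P.coeff m * (m.choose i : F) *
          ((a ^ (i+1) * wS a) * (b ^ (m - i) * wT b)
            - (a ^ i * wS a) * (b ^ (m - i + 1) * wT b)) := by
    intro a _ b _
    rw [Polynomial.eval_eq_sum_range' (lt_of_le_of_lt hP (Nat.lt_succ_self n))]
    rw [Finset.mul_sum, Finset.sum_mul]
    refine Finset.sum_congr rfl fun m _ => ?_
    rw [add_pow]
    rw [Finset.mul_sum, Finset.mul_sum, Finset.sum_mul]
    refine Finset.sum_congr rfl fun i hi => ?_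
    have e1 : a ^ (i+1) = a ^ i * a := pow_succ a i
    have e2 : b ^ (m - i + 1) = b ^ (m - i) * b := pow_succ b (m - i)
    rw [e1, e2]
    ring
  have step1 : (∑ a ∈ S, ∑ b ∈ T, (a - b) * P.eval (a + b) * (wS a * wT b)) =
      ∑ a ∈ S, ∑ b ∈ T, ∑ m ∈ range (n + 1), ∑ i ∈ range (m + 1),
        P.coeff m * (m.choose i : F) *
          ((a ^ (i+1) * wS a) * (b ^ (m - i) * wT b)
            - (a ^ i * wS a) * (b ^ (m - i + 1) * wT b)) :=
    Finset.sum_congr rfl (fun a ha => Finset.sum_congr rfl (point a ha))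
  have swap1 : (∑ a ∈ S, ∑ b ∈ T, ∑ m ∈ range (n + 1), ∑ i ∈ range (m + 1),
        P.coeff m * (m.choose i : F) *
          ((a ^ (i+1) * wS a) * (b ^ (m - i) * wT b)
            - (a ^ i * wS a) * (b ^ (m - i + 1) * wT b))) =
      ∑ m ∈ range (n + 1), ∑ i ∈ range (m + 1), ∑ a ∈ S, ∑ b ∈ T,
        P.coeff m * (m.choose i : F) *
          ((a ^ (i+1) * wS a) * (b ^ (m - i) * wT b)
            - (a ^ i * wS a) * (b ^ (m - i + 1) * wT b)) := by
    calc (∑ a ∈ S, ∑ b ∈ T, ∑ m ∈ range (n + 1), ∑ i ∈ range (m + 1),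
        P.coeff m * (m.choose i : F) *
          ((a ^ (i+1) * wS a) * (b ^ (m - i) * wT b)
            - (a ^ i * wS a) * (b ^ (m - i + 1) * wT b)))
        = ∑ a ∈ S, ∑ m ∈ range (n + 1), ∑ b ∈ T, ∑ i ∈ range (m + 1),
            P.coeff m * (m.choose i : F) *
              ((a ^ (i+1) * wS a) * (b ^ (m - i) * wT b)
                - (a ^ i * wS a) * (b ^ (m - i + 1) * wT b)) :=
          Finset.sum_congr rfl fun a _ => Finset.sum_comm
      _ = ∑ m ∈ range (n + 1), ∑ a ∈ S, ∑ b ∈ T, ∑ i ∈ range (m + 1),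
            P.coeff m * (m.choose i : F) *
              ((a ^ (i+1) * wS a) * (b ^ (m - i) * wT b)
                - (a ^ i * wS a) * (b ^ (m - i + 1) * wT b)) := Finset.sum_comm
      _ = ∑ m ∈ range (n + 1), ∑ a ∈ S, ∑ i ∈ range (m + 1), ∑ b ∈ T,
            P.coeff m * (m.choose i : F) *
              ((a ^ (i+1) * wS a) * (b ^ (m - i) * wT b)
                - (a ^ i * wS a) * (b ^ (m - i + 1) * wT b)) :=
          Finset.sum_congr rfl fun m _ => Finset.sum_congr rfl fun a _ => Finset.sum_comm
      _ = ∑ m ∈ range (n + 1), ∑ i ∈ range (m + 1), ∑ a ∈ S, ∑ b ∈ T,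
            P.coeff m * (m.choose i : F) *
              ((a ^ (i+1) * wS a) * (b ^ (m - i) * wT b)
                - (a ^ i * wS a) * (b ^ (m - i + 1) * wT b)) :=
          Finset.sum_congr rfl fun m _ => Finset.sum_comm
  have factor : ∀ m ∈ range (n + 1), ∀ j ∈ range (m + 1),
      (∑ a ∈ S, ∑ b ∈ T, P.coeff m * (m.choose j : F) *
          ((a ^ (j+1) * wS a) * (b ^ (m - j) * wT b)
            - (a ^ j * wS a) * (b ^ (m - j + 1) * wT b))) =
      P.coeff m * (m.choose j : F) *
        ((∑ a ∈ S, a ^ (j+1) * wS a) * (∑ b ∈ T, b ^ (m - j) * wT b)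
          - (∑ a ∈ S, a ^ j * wS a) * (∑ b ∈ T, b ^ (m - j + 1) * wT b)) := by
    intro m _ j _
    simp only [← Finset.mul_sum]
    congr 1
    rw [Finset.sum_mul_sum S T (fun a => a ^ (j+1) * wS a) (fun b => b ^ (m - j) * wT b),
      Finset.sum_mul_sum S T (fun a => a ^ j * wS a) (fun b => b ^ (m - j + 1) * wT b)]
    simp only [← Finset.sum_sub_distrib]
  have eval_term : ∀ m ∈ range (n + 1), ∀ j ∈ range (m + 1),
      (P.coeff m * (m.choose j : F) *
        ((∑ a ∈ S, a ^ (j+1) * wS a) * (∑ b ∈ T, b ^ (m - j) * wT b)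
          - (∑ a ∈ S, a ^ j * wS a) * (∑ b ∈ T, b ^ (m - j + 1) * wT b))) =
      (if m = n ∧ j = s then P.coeff n * (n.choose s : F) else 0)
        - (if m = n ∧ j = s + 1 then P.coeff n * (n.choose (s+1) : F) else 0) := by
    intro m hm j hj
    rw [Finset.mem_range] at hm hj
    have hm' : m ≤ n := by omega
    have hj' : j ≤ m := by omega
    by_cases h1 : m = n ∧ j = s
    · obtain ⟨hm1, hj1⟩ := h1
      rw [if_pos ⟨hm1, hj1⟩, if_neg (by omega), sub_zero, hm1, hj1]
      have hA : (∑ a ∈ S, a ^ (s+1) * wS a) = 1 := by rw [eS (s+1) (by omega), if_pos rfl]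
      have hB : (∑ b ∈ T, b ^ (n - s) * wT b) = 1 := by
        rw [eT (n - s) (by omega), if_pos (by omega)]
      have hC : (∑ a ∈ S, a ^ s * wS a) = 0 := by
        rw [eS s (by omega), if_neg (by omega)]
      rw [hA, hB, hC]
      ring
    · by_cases h2 : m = n ∧ j = s + 1
      · obtain ⟨hm1, hj1⟩ := h2
        rw [if_neg h1, if_pos ⟨hm1, hj1⟩, zero_sub, hm1, hj1]
        have hA : (∑ b ∈ T, b ^ (n - (s+1)) * wT b) = 0 := by
          rw [eT (n - (s+1)) (by omega), if_neg (by omega)]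
        have hB : (∑ a ∈ S, a ^ (s+1) * wS a) = 1 := by
          rw [eS (s+1) (by omega), if_pos rfl]
        have hD : (∑ b ∈ T, b ^ (n - (s+1) + 1) * wT b) = 1 := by
          rw [eT (n - (s+1) + 1) (by omega), if_pos (by omega)]
        rw [hA, hB, hD]
        ring
      · rw [if_neg h1, if_neg h2, sub_zero]
        have hz : ((∑ a ∈ S, a ^ (j+1) * wS a) * (∑ b ∈ T, b ^ (m - j) * wT b)
            - (∑ a ∈ S, a ^ j * wS a) * (∑ b ∈ T, b ^ (m - j + 1) * wT b)) = 0 := by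
          have hz1 : (∑ a ∈ S, a ^ (j+1) * wS a) * (∑ b ∈ T, b ^ (m - j) * wT b) = 0 := by
            rcases lt_or_ge j s with h | h
            · rw [eS (j+1) (by omega), if_neg (by omega), zero_mul]
            · rcases Nat.lt_or_ge j (s+1) with h' | h'
              · have hjs : j = s := by omega
                have hmn : ¬ (m = n) := fun hmn => h1 ⟨hmn, hjs⟩
                rw [eT (m - j) (by omega), if_neg (by omega), mul_zero]
              · have hlt : m - j < t + 1 := by
                  rcases Nat.eq_or_lt_of_le h' with h'' | h''
                  · have hmn : ¬ (m = n) := fun hmn => h2 ⟨hmn, h''.symm⟩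
                    omega
                  · omega
                rw [eT (m - j) (by omega), if_neg (by omega), mul_zero]
          have hz2 : (∑ a ∈ S, a ^ j * wS a) * (∑ b ∈ T, b ^ (m - j + 1) * wT b) = 0 := by
            rcases lt_or_ge j (s+1) with h | h
            · rw [eS j (by omega), if_neg (by omega), zero_mul]
            · have hlt : m - j + 1 < t + 1 := by
                rcases Nat.eq_or_lt_of_le h with h'' | h''
                · have hmn : ¬ (m = n) := fun hmn => h2 ⟨hmn, h''.symm⟩
                  omega
                · omega
              rw [eT (m - j + 1) (by omega), if_neg (by omega), mul_zero]
          rw [hz1, hz2, sub_zero]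
        rw [hz, mul_zero]
  have step2 : (∑ m ∈ range (n + 1), ∑ j ∈ range (m + 1), ∑ a ∈ S, ∑ b ∈ T,
        P.coeff m * (m.choose j : F) *
          ((a ^ (j+1) * wS a) * (b ^ (m - j) * wT b)
            - (a ^ j * wS a) * (b ^ (m - j + 1) * wT b))) =
      ∑ m ∈ range (n + 1), ∑ j ∈ range (m + 1),
        ((if m = n ∧ j = s then P.coeff n * (n.choose s : F) else 0)
          - (if m = n ∧ j = s + 1 then P.coeff n * (n.choose (s+1) : F) else 0)) :=
    Finset.sum_congr rfl fun m hm => Finset.sum_congr rfl fun j hj => by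
      rw [factor m hm j hj, eval_term m hm j hj]
  rw [step1, swap1, step2]
  simp only [Finset.sum_sub_distrib]
  have hone : ∀ (c : F) (r : ℕ), r < n + 1 →
      (∑ m ∈ range (n + 1), ∑ j ∈ range (m + 1),
        (if m = n ∧ j = r then c else 0)) = c := by
    intro c r hr
    rw [Finset.sum_eq_single n]
    · rw [Finset.sum_eq_single r]
      · simp
      · intro j _ hjr
        rw [if_neg (fun h => hjr h.2)]
      · intro hrn
        exact absurd (Finset.mem_range.mpr (by omega)) hrn
    · intro m _ hmn
      exact Finset.sum_eq_zero fun j _ => if_neg (fun h => hmn h.1)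
    · intro hn'
      exact absurd (Finset.mem_range.mpr (by omega)) hn'
  rw [hone _ s (by omega), hone _ (s+1) (by omega)]
  ring

lemma EH_main {p : ℕ} (hp : p.Prime) [Fact p.Prime] (A : Finset (ZMod p)) (K : ℕ)
    (hk : A.card = K + 3) (hkp : 2 * K + 3 ≤ p) :
    2 * K + 3 ≤ (((A ×ˢ A).filter fun x => x.1 ≠ x.2).image fun x => x.1 + x.2).card := by
  classical
  set D := ((A ×ˢ A).filter fun x => x.1 ≠ x.2).image fun x => x.1 + x.2 with hD
  by_contra hcon
  push_neg at hcon
  have hcard_univ : Fintype.card (ZMod p) = p := ZMod.card p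
  have hDle : D.card ≤ 2 * K + 2 := by omega
  obtain ⟨C', hDC', _, hC'card⟩ := Finset.exists_subsuperset_card_eq (Finset.subset_univ D)
    hDle (by rw [Finset.card_univ, hcard_univ]; omega)
  set P : (ZMod p)[X] := Lagrange.nodal C' id with hP
  have hPdeg : P.natDegree = 2 * K + 2 := by
    rw [hP, Lagrange.natDegree_nodal, hC'card]
  obtain ⟨a0, ha0⟩ : A.Nonempty := Finset.card_pos.mp (by omega)
  set T := A.erase a0 with hTdef
  have hT : T.card = K + 2 := by rw [hTdef, Finset.card_erase_of_mem ha0, hk]; omega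
  have hkey := key A T (K + 1) K (by omega) (by omega) P (by omega)
  have hLHS : (∑ a ∈ A, ∑ b ∈ T, (a - b) * P.eval (a + b) *
      (Lagrange.nodalWeight A id a * Lagrange.nodalWeight T id b)) = 0 := by
    refine Finset.sum_eq_zero fun a ha => Finset.sum_eq_zero fun b hb => ?_
    by_cases hab : a = b
    · rw [hab, sub_self, zero_mul, zero_mul]
    · have hmem : a + b ∈ D := by
        rw [hD]
        exact Finset.mem_image.mpr ⟨(a, b), Finset.mem_filter.mpr
          ⟨Finset.mem_product.mpr ⟨ha, Finset.mem_of_mem_erase hb⟩, hab⟩, rfl⟩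
      have : P.eval (a + b) = 0 := by
        have := Lagrange.eval_nodal_at_node (v := (id : ZMod p → ZMod p)) (hDC' hmem)
        simpa using this
      rw [this, mul_zero, zero_mul]
  have hcoeff : P.coeff (K + 1 + 1 + K) = 1 := by
    have : K + 1 + 1 + K = P.natDegree := by omega
    rw [this]
    exact (Lagrange.nodal_monic).coeff_natDegree
  rw [hLHS, hcoeff, one_mul] at hkey
  have hEq : ((2 * K + 2).choose (K + 1) : ZMod p) = ((2 * K + 2).choose (K + 2) : ZMod p) := by
    have h1 : K + 1 + 1 + K = 2 * K + 2 := by omega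
    rw [h1] at hkey
    have := sub_eq_zero.mp hkey.symm
    exact_mod_cast this
  -- nat identity: choose (2K+2) (K+2) * (K+2) = choose (2K+2) (K+1) * (K+1)
  have hnat : (2 * K + 2).choose (K + 2) * (K + 2) = (2 * K + 2).choose (K + 1) * (K + 1) := by
    have := Nat.choose_succ_right_eq (2 * K + 2) (K + 1)
    have h2 : 2 * K + 2 - (K + 1) = K + 1 := by omega
    rw [h2] at this
    exact this
  have hzero : ((2 * K + 2).choose (K + 1) : ZMod p) = 0 := by
    have hcast : ((2 * K + 2).choose (K + 2) : ZMod p) * ((K : ZMod p) + 2) =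
        ((2 * K + 2).choose (K + 1) : ZMod p) * ((K : ZMod p) + 1) := by
      exact_mod_cast congrArg (Nat.cast : ℕ → ZMod p) hnat
    rw [← hEq] at hcast
    linear_combination hcast
  rw [ZMod.natCast_eq_zero_iff] at hzero
  have hdvdfact : p ∣ (2 * K + 2).factorial := by
    have hle : K + 1 ≤ 2 * K + 2 := by omega
    have heq := Nat.choose_mul_factorial_mul_factorial hle
    have hdvd : p ∣ (2 * K + 2).choose (K + 1) * (K + 1).factorial * (2 * K + 2 - (K + 1)).factorial :=
      dvd_mul_of_dvd_left (dvd_mul_of_dvd_left hzero _) _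
    rwa [heq] at hdvd
  have := (Nat.Prime.dvd_factorial hp).mp hdvdfact
  omega

lemma EH_mono {p : ℕ} (A' A : Finset (ZMod p)) (h : A' ⊆ A) :
    (((A' ×ˢ A').filter fun x => x.1 ≠ x.2).image fun x => x.1 + x.2) ⊆
      (((A ×ˢ A).filter fun x => x.1 ≠ x.2).image fun x => x.1 + x.2) :=
  Finset.image_subset_image (Finset.filter_subset_filter _
    (Finset.product_subset_product h h))

theorem stmt9 (p : ℕ) (hp : p.Prime) (A : Finset (ZMod p)) (hA : A.Nonempty) :
    (((((A ×ˢ A).filter fun x => x.1 ≠ x.2).image fun x => x.1 + x.2).card : ℤ)) ≥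
      min (p : ℤ) (2 * (A.card : ℤ) - 3) := by
  classical
  haveI : Fact p.Prime := ⟨hp⟩
  set D := ((A ×ˢ A).filter fun x => x.1 ≠ x.2).image fun x => x.1 + x.2 with hD
  have hcard1 : 1 ≤ A.card := Finset.card_pos.mpr hA
  by_cases h1 : A.card = 1
  · have : min (p : ℤ) (2 * (A.card : ℤ) - 3) ≤ -1 := by
      refine le_trans (min_le_right _ _) ?_
      rw [h1]; norm_num
    have h0 : (0 : ℤ) ≤ D.card := Int.ofNat_nonneg _
    omega
  · -- A.card ≥ 2 : D is nonempty
    have hcard2 : 2 ≤ A.card := by omega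
    have hDne : 1 ≤ D.card := by
      obtain ⟨a, ha, b, hb, hab⟩ := Finset.one_lt_card.mp (by omega : 1 < A.card)
      refine Finset.card_pos.mpr ⟨a + b, ?_⟩
      exact Finset.mem_image.mpr ⟨(a, b), Finset.mem_filter.mpr
        ⟨Finset.mem_product.mpr ⟨ha, hb⟩, hab⟩, rfl⟩
    by_cases h2 : A.card = 2
    · have : min (p : ℤ) (2 * (A.card : ℤ) - 3) ≤ 1 := by
        refine le_trans (min_le_right _ _) ?_
        rw [h2]; norm_num
      omega
    · -- A.card ≥ 3
      obtain ⟨K, hK⟩ : ∃ K, A.card = K + 3 := ⟨A.card - 3, by omega⟩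
      by_cases h3 : 2 * K + 3 ≤ p
      · have hmain := EH_main hp A K hK h3
        have : min (p : ℤ) (2 * (A.card : ℤ) - 3) ≤ 2 * (A.card : ℤ) - 3 := min_le_right _ _
        have h4 : (2 * (A.card : ℤ) - 3) = ((2 * K + 3 : ℕ) : ℤ) := by
          rw [hK]; push_cast; ring
        have h5 : ((2 * K + 3 : ℕ) : ℤ) ≤ (D.card : ℤ) := by exact_mod_cast hmain
        omega
      · -- p < 2K + 3 : p is odd (p = 2 impossible) and we pass to a subset
        have hAle : A.card ≤ p := by
          have := Finset.card_le_univ A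
          rwa [ZMod.card p] at this
        have hp2 : p ≠ 2 := by
          intro h
          omega
        have hodd : Odd p := hp.odd_of_ne_two hp2
        have hp3 : 3 ≤ p := by
          have := hp.two_le
          omega
        obtain ⟨M, hM⟩ : ∃ M, p = 2 * M + 3 := by
          obtain ⟨r, hr⟩ := hodd
          exact ⟨r - 1, by omega⟩
        have hMA : M + 3 ≤ A.card := by omega
        obtain ⟨A', hA'sub, hA'card⟩ := Finset.exists_subset_card_eq hMA
        have hmain := EH_main hp A' M hA'card (by omega)
        have hsub := EH_mono A' A hA'sub
        have hle := Finset.card_le_card hsub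
        have hDp : 2 * M + 3 ≤ D.card := le_trans hmain hle
        have : p ≤ D.card := by omega
        have hmin : min (p : ℤ) (2 * (A.card : ℤ) - 3) ≤ (p : ℤ) := min_le_left _ _
        have : ((p : ℕ) : ℤ) ≤ (D.card : ℤ) := by exact_mod_cast this
        omega
end

section
/- (Cauchy–Davenport theorem) Let p be a prime and let A, B be nonempty subsets of Z/pZ. Then the sumset A + B = {a + b : a ∈ A, b ∈ B} satisfies |A + B| ≥ min(p, |A| + |B| − 1). -/
open scoped Pointwise

theorem stmt11 (p : ℕ) (hp : p.Prime) (A B : Finset (ZMod p))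
    (hA : A.Nonempty) (hB : B.Nonempty) :
    (((A ×ˢ B).image fun x : ZMod p × ZMod p => x.1 + x.2).card : ℤ) ≥
      min (p : ℤ) ((A.card : ℤ) + (B.card : ℤ) - 1) := by
  have h := ZMod.cauchy_davenport hp hA hB
  have himg : (A ×ˢ B).image (fun x : ZMod p × ZMod p => x.1 + x.2) = A + B := by
    rw [Finset.add_def]
  rw [himg]
  rw [min_le_iff] at h
  rcases h with h' | h'
  · exact le_trans (min_le_left _ _) (by exact_mod_cast h')
  · refine le_trans (min_le_right _ _) ?_
    have h1 : 1 ≤ A.card := hA.card_pos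
    omega
end

section
/- Let p be a prime, A and B finite subsets of Z/pZ with |A| = m ≥ 2, |B| = k ≥ 2, m ≠ k, and m + k − 2 ≤ p. Choose weights w_1 : A → Z/pZ and w_2 : B → Z/pZ such that ∑_{a∈A} w_1(a) a^i = 0 for 0 ≤ i ≤ m−2 with ∑_{a∈A} w_1(a) a^{m−1} = 1, and ∑_{b∈B} w_2(b) b^i = 0 for 0 ≤ i ≤ k−2 with ∑_{b∈B} w_2(b) b^{k−1} = 1. Define w(c) = ∑_{a+b=c, a∈A, b∈B} w_1(a) w_2(b)(a−b) for c in C = A ∔ B, and γ_n = ∑_{c∈C} w(c) c^n. Then γ_n = 0 for all 0 ≤ n ≤ m + k − 4 and γ_{m+k−3} ≠ 0. -/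
open Finset

theorem stmt14 (p : ℕ) (hp : p.Prime) (A B : Finset (ZMod p)) (m k : ℕ)
    (hAm : A.card = m) (hBk : B.card = k) (hm : 2 ≤ m) (hk : 2 ≤ k)
    (hmk : m ≠ k) (hp2 : m + k - 2 ≤ p)
    (w1 w2 : ZMod p → ZMod p)
    (hw1 : ∀ i ≤ m - 2, ∑ a ∈ A, w1 a * a ^ i = 0)
    (hw1' : ∑ a ∈ A, w1 a * a ^ (m - 1) = 1)
    (hw2 : ∀ i ≤ k - 2, ∑ b ∈ B, w2 b * b ^ i = 0)
    (hw2' : ∑ b ∈ B, w2 b * b ^ (k - 1) = 1) :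
    let C : Finset (ZMod p) :=
      ((A ×ˢ B).filter fun x => x.1 ≠ x.2).image fun x => x.1 + x.2
    let w : ZMod p → ZMod p := fun c =>
      ∑ a ∈ A, ∑ b ∈ B, if a + b = c then w1 a * w2 b * (a - b) else 0
    (∀ n ≤ m + k - 4, (∑ c ∈ C, w c * c ^ n) = 0) ∧
      (∑ c ∈ C, w c * c ^ (m + k - 3)) ≠ 0 := by
  haveI := Fact.mk hp
  intro C w
  obtain ⟨M, rfl⟩ : ∃ M, m = M + 2 := ⟨m - 2, by omega⟩
  obtain ⟨K, rfl⟩ : ∃ K, k = K + 2 := ⟨k - 2, by omega⟩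
  rw [show M + 2 - 1 = M + 1 from by omega] at hw1'
  rw [show K + 2 - 1 = K + 1 from by omega] at hw2'
  have hw1M : ∀ i ≤ M, ∑ a ∈ A, w1 a * a ^ i = 0 := fun i hi => hw1 i (by omega)
  have hw2K : ∀ i ≤ K, ∑ b ∈ B, w2 b * b ^ i = 0 := fun i hi => hw2 i (by omega)
  have key : ∀ n : ℕ, ∑ c ∈ C, w c * c ^ n
      = ∑ j ∈ range (n+1), (n.choose j : ZMod p) *
          ((∑ a ∈ A, w1 a * a ^ (j+1)) * (∑ b ∈ B, w2 b * b ^ (n-j))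
            - (∑ a ∈ A, w1 a * a ^ j) * (∑ b ∈ B, w2 b * b ^ (n-j+1))) := by
    intro n
    have step1 : ∑ c ∈ C, w c * c ^ n
        = ∑ a ∈ A, ∑ b ∈ B, w1 a * w2 b * (a - b) * (a + b) ^ n := by
      simp only [w, C, Finset.sum_mul, ite_mul, zero_mul]
      rw [Finset.sum_comm]
      refine Finset.sum_congr rfl fun a ha => ?_
      rw [Finset.sum_comm]
      refine Finset.sum_congr rfl fun b hb => ?_
      rw [Finset.sum_ite_eq]
      by_cases hab : a = b
      · subst hab; simp
      · have hmem : a + b ∈ ((A ×ˢ B).filter fun x => x.1 ≠ x.2).image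
            (fun x => x.1 + x.2) :=
          Finset.mem_image.mpr ⟨(a, b),
            Finset.mem_filter.mpr ⟨Finset.mem_product.mpr ⟨ha, hb⟩, hab⟩, rfl⟩
        simp [hmem]
    rw [step1]
    have step2 : ∀ a b : ZMod p, w1 a * w2 b * (a - b) * (a + b) ^ n
        = ∑ j ∈ range (n+1), (n.choose j : ZMod p) *
            ((w1 a * a ^ (j+1)) * (w2 b * b ^ (n-j))
              - (w1 a * a ^ j) * (w2 b * b ^ (n-j+1))) := by
      intro a b
      rw [add_pow, Finset.mul_sum]
      refine Finset.sum_congr rfl fun j hj => ?_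
      rw [pow_succ a j, pow_succ b (n-j)]
      ring
    simp only [step2]
    have swap : (∑ a ∈ A, ∑ b ∈ B, ∑ j ∈ range (n+1), (n.choose j : ZMod p) *
          ((w1 a * a ^ (j+1)) * (w2 b * b ^ (n-j))
            - (w1 a * a ^ j) * (w2 b * b ^ (n-j+1))))
        = ∑ j ∈ range (n+1), ∑ a ∈ A, ∑ b ∈ B, (n.choose j : ZMod p) *
          ((w1 a * a ^ (j+1)) * (w2 b * b ^ (n-j))
            - (w1 a * a ^ j) * (w2 b * b ^ (n-j+1))) := by
      rw [Finset.sum_congr rfl fun a (_ : a ∈ A) => (Finset.sum_comm :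
          (∑ b ∈ B, ∑ j ∈ range (n+1), (n.choose j : ZMod p) *
            ((w1 a * a ^ (j+1)) * (w2 b * b ^ (n-j))
              - (w1 a * a ^ j) * (w2 b * b ^ (n-j+1)))) = _)]
      exact Finset.sum_comm
    rw [swap]
    refine Finset.sum_congr rfl fun j _ => ?_
    rw [mul_sub, Finset.sum_mul_sum, Finset.sum_mul_sum, Finset.mul_sum,
      Finset.mul_sum, ← Finset.sum_sub_distrib]
    refine Finset.sum_congr rfl fun a _ => ?_
    rw [Finset.mul_sum, Finset.mul_sum, ← Finset.sum_sub_distrib]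
    exact Finset.sum_congr rfl fun b _ => by ring
  constructor
  · intro n hn
    have hn' : n ≤ M + K := by omega
    rw [key]
    refine Finset.sum_eq_zero fun j hj => ?_
    rw [mem_range] at hj
    have h1 : (∑ a ∈ A, w1 a * a ^ (j+1)) * (∑ b ∈ B, w2 b * b ^ (n-j)) = 0 := by
      by_cases h : j + 1 ≤ M
      · rw [hw1M _ h, zero_mul]
      · rw [hw2K _ (by omega), mul_zero]
    have h2 : (∑ a ∈ A, w1 a * a ^ j) * (∑ b ∈ B, w2 b * b ^ (n-j+1)) = 0 := by
      by_cases h : j ≤ M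
      · rw [hw1M _ h, zero_mul]
      · rw [hw2K _ (by omega), mul_zero]
    rw [h1, h2, sub_zero, mul_zero]
  · set n := M + 2 + (K + 2) - 3 with hn
    have hn' : n = M + K + 1 := by omega
    have hnp : n < p := by omega
    rw [key]
    have hsum : ∑ j ∈ range (n+1), (n.choose j : ZMod p) *
          ((∑ a ∈ A, w1 a * a ^ (j+1)) * (∑ b ∈ B, w2 b * b ^ (n-j))
            - (∑ a ∈ A, w1 a * a ^ j) * (∑ b ∈ B, w2 b * b ^ (n-j+1)))
        = ∑ j ∈ range (n+1), ((if j = M then (n.choose M : ZMod p) else 0)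
            - (if j = M + 1 then (n.choose (M+1) : ZMod p) else 0)) := by
      refine Finset.sum_congr rfl fun j hj => ?_
      rw [mem_range] at hj
      by_cases hM : j = M
      · rw [hM]
        rw [show n - M = K + 1 from by omega, show K + 1 + 1 = K + 2 from rfl]
        rw [hw1', hw2', hw1M M le_rfl]
        simp
      · by_cases hM1 : j = M + 1
        · rw [hM1]
          rw [show n - (M+1) = K from by omega, hw1', hw2', hw2K K le_rfl]
          simp
        · rcases Nat.lt_or_ge j M with h | h
          · rw [hw1M _ (by omega), hw1M _ (by omega)]
            simp [hM, hM1]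
          · have hj2 : M + 2 ≤ j := by omega
            rw [hw2K (n - j) (by omega), hw2K (n - j + 1) (by omega)]
            simp [hM, hM1]
    rw [hsum, Finset.sum_sub_distrib, Finset.sum_ite_eq' (range (n+1)) M,
      Finset.sum_ite_eq' (range (n+1)) (M+1)]
    rw [if_pos (mem_range.mpr (by omega)), if_pos (mem_range.mpr (by omega))]
    intro heq
    have heq' : (n.choose M : ZMod p) = (n.choose (M+1) : ZMod p) := by
      linear_combination heq
    have hid : n.choose (M + 1) * (M + 1) = n.choose M * (K + 1) := by
      have := Nat.choose_succ_right_eq n M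
      rwa [show n - M = K + 1 from by omega] at this
    have hid' : (n.choose (M+1) : ZMod p) * ((M : ZMod p) + 1)
        = (n.choose M : ZMod p) * ((K : ZMod p) + 1) := by
      have := congrArg (Nat.cast : ℕ → ZMod p) hid
      push_cast at this
      exact this
    rw [← heq'] at hid'
    have hne : (n.choose M : ZMod p) ≠ 0 := by
      rw [Ne, ZMod.natCast_eq_zero_iff]
      intro hdvd
      have hdn : n.choose M ∣ n.factorial :=
        ⟨Nat.factorial M * Nat.factorial (n - M), by
          rw [← mul_assoc]
          exact (Nat.choose_mul_factorial_mul_factorial (by omega)).symm⟩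
      have : p ∣ n.factorial := hdvd.trans hdn
      exact absurd ((Nat.Prime.dvd_factorial hp).mp this) (by omega)
    have hMK : ((M : ZMod p) + 1) = ((K : ZMod p) + 1) :=
      mul_left_cancel₀ hne hid'
    have hMK' : ((M + 1 : ℕ) : ZMod p) = ((K + 1 : ℕ) : ZMod p) := by
      push_cast
      exact hMK
    rw [ZMod.natCast_eq_natCast_iff] at hMK'
    have hmod : (M + 1) % p = (K + 1) % p := hMK'
    rw [Nat.mod_eq_of_lt (by omega), Nat.mod_eq_of_lt (by omega)] at hmod
    omega
end

section
/- Let p be a prime and let A, B be subsets of Z/pZ with |A| + |B| ≥ p + 2 and |A| ≠ |B|. Then the restricted sumset A ∔ B = {a + b : a ∈ A, b ∈ B, a ≠ b} is all of Z/pZ, i.e., |A ∔ B| = p. -/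
theorem stmt17 (p : ℕ) (hp : p.Prime) (A B : Finset (ZMod p))
    (h : A.card + B.card ≥ p + 2) (hcard : A.card ≠ B.card) :
    ((((A ×ˢ B).filter fun x => x.1 ≠ x.2).image fun x => x.1 + x.2)).card = p := by
  haveI : Fact p.Prime := ⟨hp⟩
  have hcardZ : Fintype.card (ZMod p) = p := ZMod.card p
  rcases eq_or_ne p 2 with rfl | hp2
  · have hA : A.card ≤ 2 := by simpa [hcardZ] using A.card_le_univ
    have hB : B.card ≤ 2 := by simpa [hcardZ] using B.card_le_univ
    omega
  · have h2 : (2 : ZMod p) ≠ 0 := by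
      intro hc
      have h2' : ((2 : ℕ) : ZMod p) = 0 := by exact_mod_cast hc
      have hdvd := (ZMod.natCast_eq_zero_iff 2 p).mp h2'
      have := Nat.le_of_dvd (by norm_num) hdvd
      have := hp.two_le
      omega
    have huniv : (((A ×ˢ B).filter fun x => x.1 ≠ x.2).image fun x => x.1 + x.2) =
        Finset.univ := by
      apply Finset.eq_univ_of_forall
      intro c
      have hinj : Function.Injective (fun b : ZMod p => c - b) := fun x y hxy => by
        simpa using hxy
      have himg : (B.image fun b => c - b).card = B.card :=
        Finset.card_image_of_injective _ hinj
      have hu : (A ∪ B.image fun b => c - b).card ≤ p := by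
        simpa [hcardZ] using (A ∪ B.image fun b => c - b).card_le_univ
      have hkey : 2 ≤ (A ∩ B.image fun b => c - b).card := by
        have := Finset.card_inter_add_card_union A (B.image fun b => c - b)
        omega
      obtain ⟨a1, ha1, a2, ha2, hne⟩ := Finset.one_lt_card.mp hkey
      have hex : ∃ a ∈ A ∩ B.image fun b => c - b, a ≠ c - a := by
        by_contra hcon
        push_neg at hcon
        have e1 := hcon a1 ha1
        have e2 := hcon a2 ha2
        apply hne
        have hz : (2 : ZMod p) * (a1 - a2) = 0 := by linear_combination e1 - e2
        have := (mul_eq_zero.mp hz).resolve_left h2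
        exact sub_eq_zero.mp this
      obtain ⟨a, ha, hane⟩ := hex
      rw [Finset.mem_inter, Finset.mem_image] at ha
      obtain ⟨haA, b, hbB, hb⟩ := ha
      simp only [Finset.mem_image, Finset.mem_filter, Finset.mem_product]
      refine ⟨(a, b), ⟨⟨haA, hbB⟩, ?_⟩, ?_⟩
      · intro heq
        simp only at heq
        subst heq
        exact hane hb.symm
      · rw [← hb]; ring
    rw [huniv, Finset.card_univ, hcardZ]
end
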